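/- Kähler's identity for the total angular momentum operator holds algebraically: for every U ∈ A, (K+1)((K+1)(U)) = −(J₁(J₁(U)) + J₂(J₂(U)) + J₃(J₃(U))) + (K+1)(U). -/

import Mathlib

/-!
Writing `S U := Σ_l w^l U w^l`, the relation `(w^l)² = -1` gives `J_l(U) w^l = (S U + 3U)/2`
summed over `l`, so `K+1 = (S + 3)/2`; it also shows that `J_l(U)` anticommutes with `w^l`, whence
`J_l(J_l U) = -J_l(U) w^l` and `-Σ_l J_l² = K+1`. The `-w^l` multiply like the quaternion units
`i, j, k`, which gives `S² = 3 - 2S`, i.e. `(S + 3)(S - 1) = 0`, i.e. `(K+1)² = 2(K+1)`.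
-/

open scoped TensorProduct

noncomputable section

/-- The standard positive-definite quadratic form on `ℝ³`. -/
abbrev Q3 : QuadraticForm ℝ (Fin 3 → ℝ) :=
  QuadraticMap.weightedSumSquares ℝ (fun _ : Fin 3 => (1 : ℝ))

/-- The Clifford algebra of 3-dimensional Euclidean space. -/
abbrev Cl3 : Type := CliffordAlgebra Q3

/-- The tensor product of two copies of `Cl3`, as ℝ-algebras. -/
abbrev A3 : Type := Cl3 ⊗[ℝ] Cl3

/-- The generators `e₁, e₂, e₃` (indexed by `Fin 3`). -/
def e (l : Fin 3) : Cl3 := CliffordAlgebra.ι Q3 (Pi.single l 1)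

/-- `X_l := e_l ⊗ e_l`. -/
def X (l : Fin 3) : A3 := e l ⊗ₜ[ℝ] e l

/-- `w^i := (e_j e_k) ⊗ 1` for `(i,j,k)` a cyclic permutation of the indices. -/
def w (i : Fin 3) : A3 := (e (i + 1) * e (i + 2)) ⊗ₜ[ℝ] (1 : Cl3)

/-- The (ℝ-linear) operators `J_l(U) := (1/2)(w^l U − U w^l)`. -/
def J (l : Fin 3) (U : A3) : A3 := (1/2 : ℝ) • (w l * U - U * w l)

/-- Kähler's total angular momentum operator `K+1`. -/
def K1 (U : A3) : A3 := J 0 U * w 0 + J 1 U * w 1 + J 2 U * w 2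

/-- The idempotents `I_{ij}^ε := (1/2)(1 + ε X_i X_j)`. -/
def Iem (i j : Fin 3) (ε : ℝ) : A3 := (1/2 : ℝ) • ((1 : A3) + ε • (X i * X j))

/-- The idempotents `P_l^δ := (1/2)(1 + δ X_l)`. -/
def P (l : Fin 3) (δ : ℝ) : A3 := (1/2 : ℝ) • ((1 : A3) + δ • X l)

theorem e_mul_self (l : Fin 3) : e l * e l = 1 := by
  rw [e, CliffordAlgebra.ι_sq_scalar]
  simp [QuadraticMap.weightedSumSquares_apply, Pi.single_apply]

theorem e_mul_e_of_ne {l m : Fin 3} (h : l ≠ m) : e l * e m = -(e m * e l) := by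
  refine CliffordAlgebra.ι_mul_ι_comm_of_isOrtho (QuadraticMap.isOrtho_def.2 ?_)
  fin_cases l <;> fin_cases m <;>
    simp_all [QuadraticMap.weightedSumSquares_apply, Fin.sum_univ_three]

theorem e_mul_e_mul_self {a b : Fin 3} (hab : a ≠ b) : e a * e b * (e a * e b) = -1 := by
  rw [mul_assoc, ← mul_assoc (e b), e_mul_e_of_ne hab.symm, neg_mul, mul_neg,
    mul_assoc (e a) (e b), e_mul_self, mul_one, e_mul_self]

theorem e_mul_e_mul_e_mul_e {a b c : Fin 3} (hac : a ≠ c) :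
    e a * e b * (e b * e c) = -(e c * e a) := by
  rw [mul_assoc, ← mul_assoc (e b), e_mul_self, one_mul, e_mul_e_of_ne hac]

theorem w_eq_includeLeft (i : Fin 3) :
    w i = Algebra.TensorProduct.includeLeft (S := ℝ) (e (i + 1) * e (i + 2)) :=
  rfl

theorem w_mul_self (i : Fin 3) : w i * w i = -1 := by
  have h : e (i + 1) * e (i + 2) * (e (i + 1) * e (i + 2)) = -1 := by
    fin_cases i <;> exact e_mul_e_mul_self (by decide)
  rw [w_eq_includeLeft, ← map_mul, h, map_neg, map_one]

theorem w_mul_w_add_one (i : Fin 3) : w i * w (i + 1) = -w (i + 2) := by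
  have h : e (i + 1) * e (i + 2) * (e (i + 1 + 1) * e (i + 1 + 2)) =
      -(e (i + 2 + 1) * e (i + 2 + 2)) := by
    fin_cases i <;> exact e_mul_e_mul_e_mul_e (by decide)
  rw [w_eq_includeLeft, w_eq_includeLeft, w_eq_includeLeft, ← map_mul, h, map_neg]

section QuaternionTriple

variable {R : Type*} [Ring R]

/-- A left-handed quaternion basis: `q 1, q 0, q 2` (equivalently `-q 0, -q 1, -q 2`) satisfy
Hamilton's relations `i² = j² = k² = ijk = -1`. -/
structure IsQuaternionTriple (q : Fin 3 → R) : Prop where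
  mul_self : ∀ i, q i * q i = -1
  mul_add_one : ∀ i, q i * q (i + 1) = -q (i + 2)

theorem IsQuaternionTriple.add_one_mul {q : Fin 3 → R} (hq : IsQuaternionTriple q) (i : Fin 3) :
    q (i + 1) * q i = q (i + 2) := by
  have h₁ : i + 1 + 1 = i + 2 := by fin_cases i <;> rfl
  have h₂ : i + 1 + 2 = i := by fin_cases i <;> rfl
  calc q (i + 1) * q i = q (i + 1) * -(q (i + 1) * q (i + 2)) := by
        rw [← h₁, hq.mul_add_one, h₂, neg_neg]
    _ = q (i + 2) := by rw [mul_neg, ← mul_assoc, hq.mul_self, neg_one_mul, neg_neg]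

variable [Algebra ℝ R]

def sandwichSum (q : Fin 3 → R) : R →ₗ[ℝ] R :=
  ∑ l, LinearMap.mulLeft ℝ (q l) ∘ₗ LinearMap.mulRight ℝ (q l)

theorem sandwichSum_apply (q : Fin 3 → R) (U : R) : sandwichSum q U = ∑ l, q l * U * q l := by
  simp [sandwichSum, mul_assoc]

theorem IsQuaternionTriple.sandwichSum_sandwichSum {q : Fin 3 → R} (hq : IsQuaternionTriple q)
    (U : R) :
    sandwichSum q (sandwichSum q U) = (3 : ℝ) • U - (2 : ℝ) • sandwichSum q U := by
  have reassoc : ∀ l m, q l * (q m * U * q m) * q l = q l * q m * U * (q m * q l) := by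
    intro l m; simp only [mul_assoc]
  have h01 : q 0 * q 1 = -q 2 := hq.mul_add_one 0
  have h12 : q 1 * q 2 = -q 0 := hq.mul_add_one 1
  have h20 : q 2 * q 0 = -q 1 := hq.mul_add_one 2
  have h10 : q 1 * q 0 = q 2 := hq.add_one_mul 0
  have h21 : q 2 * q 1 = q 0 := hq.add_one_mul 1
  have h02 : q 0 * q 2 = q 1 := hq.add_one_mul 2
  simp only [sandwichSum_apply, Fin.sum_univ_three, mul_add, add_mul, reassoc, hq.mul_self,
    h01, h12, h20, h10, h21, h02, neg_mul, mul_neg, one_mul, mul_one, neg_neg]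
  module

end QuaternionTriple

theorem isQuaternionTriple_w : IsQuaternionTriple w := ⟨w_mul_self, w_mul_w_add_one⟩

theorem w_mul_J (l : Fin 3) (U : A3) : w l * J l U = -(J l U * w l) := by
  simp only [J, mul_smul_comm, smul_mul_assoc, mul_sub, sub_mul, ← mul_assoc, w_mul_self,
    mul_assoc U, neg_one_mul, mul_neg_one]
  module

theorem J_J (l : Fin 3) (U : A3) : J l (J l U) = -(J l U * w l) := by
  rw [J, w_mul_J]
  module

theorem neg_sum_J_J (U : A3) : -(J 0 (J 0 U) + J 1 (J 1 U) + J 2 (J 2 U)) = K1 U := by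
  simp only [J_J, K1, neg_add, neg_neg]

theorem J_mul_w (l : Fin 3) (U : A3) : J l U * w l = (1 / 2 : ℝ) • (w l * U * w l + U) := by
  simp only [J, smul_mul_assoc, sub_mul, mul_assoc U, w_mul_self, mul_neg_one, sub_neg_eq_add]

theorem K1_eq_sandwichSum (U : A3) :
    K1 U = (1 / 2 : ℝ) • (sandwichSum w U + (3 : ℝ) • U) := by
  simp only [K1, J_mul_w, sandwichSum_apply, Fin.sum_univ_three]
  module

theorem K1_K1 (U : A3) : K1 (K1 U) = (2 : ℝ) • K1 U := by
  rw [K1_eq_sandwichSum (K1 U), K1_eq_sandwichSum U]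
  simp only [map_add, map_smul, isQuaternionTriple_w.sandwichSum_sandwichSum]
  module

/-- Kähler's identity `(K+1)² U = −Σ_l J_l² U + (K+1) U`, algebraically. -/
theorem stmt19 (U : A3) :
    K1 (K1 U) = -(J 0 (J 0 U) + J 1 (J 1 U) + J 2 (J 2 U)) + K1 U := by
  rw [neg_sum_J_J, K1_K1, two_smul]
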